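/- Suppose F and G are continuous distribution functions with densities f and g such that supp(f) ∪ supp(g) contains an open neighborhood of D_p, and suppose (F,G) lies in the interior of H₀, i.e. there exists z ∈ D_p with F(z) > G(z). Let X₁,…,X_m be i.i.d. from F and, independently, Y₁,…,Y_n i.i.d. from G, and let m,n → ∞ with m/(m+n) → λ. Then T_min(𝔽_m,𝔾_n) → −∞ in probability and T_tsep(𝔽_m,𝔾_n) → −∞ in probability; that is, for every M > 0, P(T_min(𝔽_m,𝔾_n) ≤ −M) → 1 and P(T_tsep(𝔽_m,𝔾_n) ≤ −M) → 1. -/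

import Mathlib

open MeasureTheory ProbabilityTheory Filter Topology

noncomputable section

/-- Generalized inverse (quantile function) of a distribution function. -/
def qinv (K : ℝ → ℝ) (t : ℝ) : ℝ := sInf {x | t ≤ K x}

/-- `D_p(F,G) = [H⁻¹(p), H⁻¹(1−p)]` with `H = λF + (1−λ)G`. -/
def Dp (lam p : ℝ) (F G : ℝ → ℝ) : Set ℝ :=
  Set.Icc (qinv (fun x => lam * F x + (1 - lam) * G x) p)
          (qinv (fun x => lam * F x + (1 - lam) * G x) (1 - p))

variable {Ω : Type*}

/-- Empirical distribution function based on the first `m` observations. -/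
def ecdf (X : ℕ → Ω → ℝ) (m : ℕ) (ω : Ω) (x : ℝ) : ℝ :=
  (m : ℝ)⁻¹ * ∑ i ∈ Finset.range m, if X i ω ≤ x then (1 : ℝ) else 0

/-- Pooled empirical distribution function `𝓗_N = (m𝔽_m + n𝔾_n)/N`. -/
def pooled (X Y : ℕ → Ω → ℝ) (m n : ℕ) (ω : Ω) (x : ℝ) : ℝ :=
  ((m : ℝ) + (n : ℝ))⁻¹ * ((m : ℝ) * ecdf X m ω x + (n : ℝ) * ecdf Y n ω x)

/-- The minimum t-statistic `T_min`. -/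
def Tmin (p : ℝ) (X Y : ℕ → Ω → ℝ) (m n : ℕ) (ω : Ω) : ℝ :=
  sInf ((fun x => (ecdf Y n ω x - ecdf X m ω x) /
      Real.sqrt (ecdf X m ω x * (1 - ecdf X m ω x) / (m : ℝ) +
        ecdf Y n ω x * (1 - ecdf Y n ω x) / (n : ℝ))) ''
    Set.Icc (qinv (pooled X Y m n ω) p) (qinv (pooled X Y m n ω) (1 - p)))

/-- The two-sample empirical process statistic `T_tsep`. -/
def Ttsep (p : ℝ) (X Y : ℕ → Ω → ℝ) (m n : ℕ) (ω : Ω) : ℝ :=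
  Real.sqrt ((m : ℝ) * (n : ℝ) / ((m : ℝ) + (n : ℝ))) *
    sInf ((fun z => (ecdf Y n ω (qinv (pooled X Y m n ω) z) -
        ecdf X m ω (qinv (pooled X Y m n ω) z)) / Real.sqrt (z * (1 - z))) ''
      Set.Icc p (1 - p))

section A
variable (X Y : ℕ → Ω → ℝ) (m n : ℕ) (ω : Ω)

lemma sum_ind_nonneg (x : ℝ) : 0 ≤ ∑ i ∈ Finset.range m, if X i ω ≤ x then (1:ℝ) else 0 :=
  Finset.sum_nonneg fun i _ => by positivity

lemma sum_ind_le (x : ℝ) : ∑ i ∈ Finset.range m, (if X i ω ≤ x then (1:ℝ) else 0) ≤ m := by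
  calc ∑ i ∈ Finset.range m, (if X i ω ≤ x then (1:ℝ) else 0)
      ≤ ∑ i ∈ Finset.range m, 1 := Finset.sum_le_sum fun i _ => by split <;> norm_num
    _ = m := by simp

lemma ecdf_nonneg (x : ℝ) : 0 ≤ ecdf X m ω x := by
  have := sum_ind_nonneg X m ω x
  have h2 : (0:ℝ) ≤ (m:ℝ)⁻¹ := by positivity
  exact mul_nonneg h2 this

lemma ecdf_le_one (x : ℝ) : ecdf X m ω x ≤ 1 := by
  rcases Nat.eq_zero_or_pos m with h | h
  · simp [ecdf, h]
  · have hm : (0:ℝ) < m := by exact_mod_cast h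
    have := sum_ind_le X m ω x
    rw [ecdf, inv_mul_le_iff₀ hm]
    simpa using this

lemma ecdf_mono : Monotone (ecdf X m ω) := by
  intro x y hxy
  unfold ecdf
  have hs : ∑ i ∈ Finset.range m, (if X i ω ≤ x then (1:ℝ) else 0)
      ≤ ∑ i ∈ Finset.range m, (if X i ω ≤ y then (1:ℝ) else 0) := by
    refine Finset.sum_le_sum fun i _ => ?_
    split
    · split
      · exact le_refl _
      · rename_i h1 h2; exact absurd (h1.trans hxy) h2
    · split <;> norm_num
  have h2 : (0:ℝ) ≤ (m:ℝ)⁻¹ := by positivity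
  exact mul_le_mul_of_nonneg_left hs h2

lemma pooled_nonneg (x : ℝ) : 0 ≤ pooled X Y m n ω x := by
  unfold pooled
  have h1 := ecdf_nonneg X m ω x
  have h2 := ecdf_nonneg Y n ω x
  positivity

lemma pooled_le_one (x : ℝ) : pooled X Y m n ω x ≤ 1 := by
  rcases Nat.eq_zero_or_pos (m + n) with h | h
  · obtain ⟨h1, h2⟩ := Nat.add_eq_zero.mp h
    simp [pooled, h1, h2, ecdf]
  · have hmn : (0:ℝ) < (m:ℝ) + n := by
      have : (0:ℕ) < m + n := h
      exact_mod_cast this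
    rw [pooled, inv_mul_le_iff₀ hmn, mul_one]
    have h1 := ecdf_le_one X m ω x
    have h2 := ecdf_le_one Y n ω x
    have h3 := ecdf_nonneg X m ω x
    have h4 := ecdf_nonneg Y n ω x
    nlinarith [Nat.cast_nonneg (α := ℝ) m, Nat.cast_nonneg (α := ℝ) n]

lemma pooled_mono : Monotone (pooled X Y m n ω) := by
  intro x y hxy
  unfold pooled
  have h1 := ecdf_mono X m ω hxy
  have h2 := ecdf_mono Y n ω hxy
  have h3 : (0:ℝ) ≤ ((m:ℝ)+n)⁻¹ := by positivity
  have h4 : (0:ℝ) ≤ (m:ℝ) := Nat.cast_nonneg m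
  have h5 : (0:ℝ) ≤ (n:ℝ) := Nat.cast_nonneg n
  have := mul_le_mul_of_nonneg_left h1 h4
  have := mul_le_mul_of_nonneg_left h2 h5
  have : (↑m * ecdf X m ω x + ↑n * ecdf Y n ω x) ≤ (↑m * ecdf X m ω y + ↑n * ecdf Y n ω y) := by linarith
  exact mul_le_mul_of_nonneg_left this h3


/-- data finset -/
def dataF (X Y : ℕ → Ω → ℝ) (m n : ℕ) (ω : Ω) : Finset ℝ :=
  (Finset.range m).image (fun i => X i ω) ∪ (Finset.range n).image (fun j => Y j ω)

lemma dataF_nonempty (hm : 0 < m) : (dataF X Y m n ω).Nonempty := by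
  refine Finset.Nonempty.mono Finset.subset_union_left ?_
  exact Finset.Nonempty.image (Finset.nonempty_range_iff.mpr hm.ne') _

lemma pooled_eq_zero (x : ℝ) (hx : ∀ d ∈ dataF X Y m n ω, x < d) :
    pooled X Y m n ω x = 0 := by
  have h1 : ∑ i ∈ Finset.range m, (if X i ω ≤ x then (1:ℝ) else 0) = 0 := by
    refine Finset.sum_eq_zero fun i hi => ?_
    have : x < X i ω := hx _ (Finset.mem_union_left _ (Finset.mem_image_of_mem _ hi))
    simp [not_le.mpr this]
  have h2 : ∑ j ∈ Finset.range n, (if Y j ω ≤ x then (1:ℝ) else 0) = 0 := by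
    refine Finset.sum_eq_zero fun j hj => ?_
    have : x < Y j ω := hx _ (Finset.mem_union_right _ (Finset.mem_image_of_mem _ hj))
    simp [not_le.mpr this]
  simp [pooled, ecdf, h1, h2]

lemma pooled_eq_one (hmn : 0 < m + n) (x : ℝ) (hx : ∀ d ∈ dataF X Y m n ω, d ≤ x) :
    pooled X Y m n ω x = 1 := by
  have hX1 : (m:ℝ) * ecdf X m ω x = m := by
    rcases Nat.eq_zero_or_pos m with h | h
    · simp [h]
    · have h1 : ∑ i ∈ Finset.range m, (if X i ω ≤ x then (1:ℝ) else 0) = m := by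
        have : ∀ i ∈ Finset.range m, (if X i ω ≤ x then (1:ℝ) else 0) = 1 := by
          intro i hi
          have : X i ω ≤ x := hx _ (Finset.mem_union_left _ (Finset.mem_image_of_mem _ hi))
          simp [this]
        rw [Finset.sum_congr rfl this]; simp
      have hm : ((m:ℝ)) ≠ 0 := by exact_mod_cast h.ne'
      rw [ecdf, h1]; field_simp
  have hY1 : (n:ℝ) * ecdf Y n ω x = n := by
    rcases Nat.eq_zero_or_pos n with h | h
    · simp [h]
    · have h1 : ∑ j ∈ Finset.range n, (if Y j ω ≤ x then (1:ℝ) else 0) = n := by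
        have : ∀ j ∈ Finset.range n, (if Y j ω ≤ x then (1:ℝ) else 0) = 1 := by
          intro j hj
          have : Y j ω ≤ x := hx _ (Finset.mem_union_right _ (Finset.mem_image_of_mem _ hj))
          simp [this]
        rw [Finset.sum_congr rfl this]; simp
      have hn : ((n:ℝ)) ≠ 0 := by exact_mod_cast h.ne'
      rw [ecdf, h1]; field_simp
  have hmn' : ((m:ℝ) + n) ≠ 0 := by
    have : (0:ℕ) < m + n := hmn
    have : (0:ℝ) < (m:ℝ) + n := by exact_mod_cast this
    exact this.ne'
  rw [pooled, hX1, hY1]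
  field_simp

lemma bddBelow_pooled_set (hm : 0 < m) {t : ℝ} (ht : 0 < t) :
    BddBelow {x | t ≤ pooled X Y m n ω x} := by
  refine ⟨(dataF X Y m n ω).min' (dataF_nonempty X Y m n ω hm), fun x hx => ?_⟩
  by_contra hlt
  push_neg at hlt
  have : pooled X Y m n ω x = 0 :=
    pooled_eq_zero X Y m n ω x (fun d hd => lt_of_lt_of_le hlt (Finset.min'_le _ _ hd))
  simp only [Set.mem_setOf_eq, this] at hx
  linarith

lemma pooled_set_nonempty (hm : 0 < m) {t : ℝ} (ht : t ≤ 1) :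
    {x | t ≤ pooled X Y m n ω x}.Nonempty := by
  refine ⟨(dataF X Y m n ω).max' (dataF_nonempty X Y m n ω hm), ?_⟩
  have : pooled X Y m n ω ((dataF X Y m n ω).max' (dataF_nonempty X Y m n ω hm)) = 1 :=
    pooled_eq_one X Y m n ω (by omega) _ (fun d hd => Finset.le_max' _ _ hd)
  simp only [Set.mem_setOf_eq, this]
  exact ht

lemma qinv_pooled_le (hm : 0 < m) {t z : ℝ} (ht : 0 < t) (h : t ≤ pooled X Y m n ω z) :
    qinv (pooled X Y m n ω) t ≤ z :=
  csInf_le (bddBelow_pooled_set X Y m n ω hm ht) h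

lemma le_qinv_pooled (hm : 0 < m) {t z : ℝ} (ht : t ≤ 1) (h : pooled X Y m n ω z < t) :
    z ≤ qinv (pooled X Y m n ω) t := by
  refine le_csInf (pooled_set_nonempty X Y m n ω hm ht) (fun x hx => ?_)
  by_contra hlt
  push_neg at hlt
  have := pooled_mono X Y m n ω hlt.le
  simp only [Set.mem_setOf_eq] at hx
  linarith

lemma pooled_qinv_ge (hm : 0 < m) {t : ℝ} (ht0 : 0 < t) (ht1 : t ≤ 1) :
    t ≤ pooled X Y m n ω (qinv (pooled X Y m n ω) t) := by
  set s₀ := qinv (pooled X Y m n ω) t with hs₀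
  set T := (dataF X Y m n ω).filter (fun d => s₀ < d) with hT
  set ε := if hT : T.Nonempty then T.min' hT - s₀ else 1 with hε
  have hεpos : 0 < ε := by
    rw [hε]
    split
    · rename_i hTne
      have h0 := Finset.min'_mem T hTne
      have h1 : T.min' hTne ∈ Finset.filter (fun d => s₀ < d) (dataF X Y m n ω) := h0
      linarith [(Finset.mem_filter.mp h1).2]
    · norm_num
  obtain ⟨x, hxS, hxlt⟩ := Real.lt_sInf_add_pos
    (pooled_set_nonempty X Y m n ω hm ht1) hεpos
  have hs₀x : s₀ ≤ x := csInf_le (bddBelow_pooled_set X Y m n ω hm ht0) hxS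
  have key : ∀ d ∈ dataF X Y m n ω, (d ≤ s₀ ↔ d ≤ x) := by
    intro d hd
    constructor
    · exact fun h => h.trans hs₀x
    · intro h
      by_contra hc
      push_neg at hc
      have hdT : d ∈ T := Finset.mem_filter.mpr ⟨hd, hc⟩
      have h1 : T.min' ⟨d, hdT⟩ ≤ d := Finset.min'_le _ _ hdT
      have h2 : ε = T.min' ⟨d, hdT⟩ - s₀ := by rw [hε, dif_pos ⟨d, hdT⟩]
      have h3 : s₀ + ε ≤ d := by rw [h2]; linarith
      have h4 : x < s₀ + ε := by
        have : s₀ = sInf {x | t ≤ pooled X Y m n ω x} := hs₀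
        rw [this]; exact hxlt
      linarith [h.trans_lt h4]
  have hpe : pooled X Y m n ω s₀ = pooled X Y m n ω x := by
    have e1 : ∑ i ∈ Finset.range m, (if X i ω ≤ s₀ then (1:ℝ) else 0)
        = ∑ i ∈ Finset.range m, (if X i ω ≤ x then (1:ℝ) else 0) := by
      refine Finset.sum_congr rfl (fun i hi => ?_)
      have h := key (X i ω) (Finset.mem_union_left _ (Finset.mem_image_of_mem _ hi))
      by_cases hc : X i ω ≤ s₀
      · simp [hc, h.mp hc]
      · have hc2 : ¬ X i ω ≤ x := fun hx => hc (h.mpr hx)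
        simp [hc, hc2]
    have e2 : ∑ j ∈ Finset.range n, (if Y j ω ≤ s₀ then (1:ℝ) else 0)
        = ∑ j ∈ Finset.range n, (if Y j ω ≤ x then (1:ℝ) else 0) := by
      refine Finset.sum_congr rfl (fun j hj => ?_)
      have h := key (Y j ω) (Finset.mem_union_right _ (Finset.mem_image_of_mem _ hj))
      by_cases hc : Y j ω ≤ s₀
      · simp [hc, h.mp hc]
      · have hc2 : ¬ Y j ω ≤ x := fun hx => hc (h.mpr hx)
        simp [hc, hc2]
    unfold pooled ecdf
    rw [e1, e2]
  rw [hpe]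
  exact hxS

lemma ecdf_eq_of_pooled_eq (hm : 0 < m) {x y : ℝ} (hxy : x ≤ y)
    (hpe : pooled X Y m n ω x = pooled X Y m n ω y) :
    ecdf X m ω x = ecdf X m ω y ∧ ecdf Y n ω x = ecdf Y n ω y := by
  have hmn : (0:ℝ) < (m:ℝ) + n := by
    have : (0:ℕ) < m + n := by omega
    exact_mod_cast this
  have h1 : (m:ℝ) * ecdf X m ω x + n * ecdf Y n ω x
      = (m:ℝ) * ecdf X m ω y + n * ecdf Y n ω y := by
    have := hpe
    unfold pooled at this
    exact mul_left_cancel₀ (inv_ne_zero hmn.ne') this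
  have hU := ecdf_mono X m ω hxy
  have hV := ecdf_mono Y n ω hxy
  have hmpos : (0:ℝ) < m := by exact_mod_cast hm
  have hnn : (0:ℝ) ≤ n := Nat.cast_nonneg n
  have hUe : ecdf X m ω x = ecdf X m ω y := by nlinarith
  refine ⟨hUe, ?_⟩
  rcases Nat.eq_zero_or_pos n with h | h
  · simp [ecdf, h]
  · have hnpos : (0:ℝ) < n := by exact_mod_cast h
    nlinarith


lemma ecdf_mem_range (x : ℝ) :
    ecdf X m ω x ∈ (fun k : ℕ => (m : ℝ)⁻¹ * k) '' Set.Iic m := by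
  have hsum : ∑ i ∈ Finset.range m, (if X i ω ≤ x then (1:ℝ) else 0)
      = (((Finset.range m).filter (fun i => X i ω ≤ x)).card : ℝ) := by
    rw [Finset.sum_boole]
  refine ⟨((Finset.range m).filter (fun i => X i ω ≤ x)).card, ?_, ?_⟩
  · simp only [Set.mem_Iic]
    calc ((Finset.range m).filter (fun i => X i ω ≤ x)).card
        ≤ (Finset.range m).card := Finset.card_filter_le _ _
      _ = m := Finset.card_range m
  · rw [ecdf, hsum]

lemma bddBelow_Tmin_image (s : Set ℝ) :
    BddBelow ((fun x => (ecdf Y n ω x - ecdf X m ω x) /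
      Real.sqrt (ecdf X m ω x * (1 - ecdf X m ω x) / (m : ℝ) +
        ecdf Y n ω x * (1 - ecdf Y n ω x) / (n : ℝ))) '' s) := by
  have hA : ((fun k : ℕ => (m : ℝ)⁻¹ * k) '' Set.Iic m).Finite :=
    (Set.finite_Iic m).image _
  have hB : ((fun k : ℕ => (n : ℝ)⁻¹ * k) '' Set.Iic n).Finite :=
    (Set.finite_Iic n).image _
  have hsub : ((fun x => (ecdf Y n ω x - ecdf X m ω x) /
      Real.sqrt (ecdf X m ω x * (1 - ecdf X m ω x) / (m : ℝ) +
        ecdf Y n ω x * (1 - ecdf Y n ω x) / (n : ℝ))) '' s) ⊆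
      (fun uv : ℝ × ℝ => (uv.2 - uv.1) /
        Real.sqrt (uv.1 * (1 - uv.1) / (m : ℝ) + uv.2 * (1 - uv.2) / (n : ℝ))) ''
        (((fun k : ℕ => (m : ℝ)⁻¹ * k) '' Set.Iic m) ×ˢ
          ((fun k : ℕ => (n : ℝ)⁻¹ * k) '' Set.Iic n)) := by
    rintro - ⟨x, hx, rfl⟩
    exact ⟨(ecdf X m ω x, ecdf Y n ω x),
      Set.mk_mem_prod (ecdf_mem_range X m ω x) (ecdf_mem_range Y n ω x), rfl⟩
  exact (((hA.prod hB).image _).subset hsub).bddBelow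

lemma Ttsep_value_lb {p : ℝ} (hp0 : 0 < p) (hp1 : p < 1/2) {z : ℝ}
    (hz : z ∈ Set.Icc p (1 - p)) (x : ℝ) :
    -(Real.sqrt (p * (1 - p)))⁻¹ ≤ (ecdf Y n ω x - ecdf X m ω x) / Real.sqrt (z * (1 - z)) := by
  obtain ⟨hz1, hz2⟩ := hz
  have hpq : 0 < p * (1 - p) := by nlinarith
  have hzz : p * (1 - p) ≤ z * (1 - z) := by nlinarith
  have hs' : 0 < Real.sqrt (p * (1 - p)) := Real.sqrt_pos.mpr hpq
  have hs : 0 < Real.sqrt (z * (1 - z)) := Real.sqrt_pos.mpr (lt_of_lt_of_le hpq hzz)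
  have hss : Real.sqrt (p * (1 - p)) ≤ Real.sqrt (z * (1 - z)) := Real.sqrt_le_sqrt hzz
  have hnum : (-1 : ℝ) ≤ ecdf Y n ω x - ecdf X m ω x := by
    have := ecdf_le_one X m ω x
    have := ecdf_nonneg Y n ω x
    linarith
  calc -(Real.sqrt (p * (1 - p)))⁻¹
      ≤ -(Real.sqrt (z * (1 - z)))⁻¹ := by
        have : (Real.sqrt (z * (1-z)))⁻¹ ≤ (Real.sqrt (p * (1-p)))⁻¹ :=
          inv_anti₀ hs' hss
        linarith
    _ = (-1) / Real.sqrt (z * (1 - z)) := by rw [neg_div, one_div]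
    _ ≤ (ecdf Y n ω x - ecdf X m ω x) / Real.sqrt (z * (1 - z)) :=
        (div_le_div_iff_of_pos_right hs).mpr hnum

end A

section B

lemma ecdf_tendsto_ae {Ω : Type*} [MeasurableSpace Ω] (P : Measure Ω) [IsProbabilityMeasure P]
    (X : ℕ → Ω → ℝ) (hX : ∀ i, Measurable (X i)) (μ : Measure ℝ)
    (hXd : ∀ i, Measure.map (X i) P = μ)
    (hpind : Pairwise fun i j => IndepFun (X i) (X j) P) (c : ℝ) :
    ∀ᵐ ω ∂P, Tendsto (fun N => ecdf X N ω c) atTop (𝓝 ((μ (Set.Iic c)).toReal)) := by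
  set φ : ℝ → ℝ := (Set.Iic c).indicator (fun _ => (1:ℝ)) with hφ
  have φm : Measurable φ := measurable_const.indicator measurableSet_Iic
  set Z : ℕ → Ω → ℝ := fun i ω => φ (X i ω) with hZ
  have hZeq : ∀ i ω, Z i ω = if X i ω ≤ c then (1:ℝ) else 0 := by
    intro i ω
    simp [hZ, hφ, Set.indicator_apply, Set.mem_Iic]
  have hint : Integrable (Z 0) P := by
    have : Z 0 = (X 0 ⁻¹' Set.Iic c).indicator (fun _ => (1:ℝ)) := by
      ext ω
      classical
      rw [hZeq, Set.indicator_apply]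
      by_cases hc : X 0 ω ≤ c <;> simp [Set.mem_preimage, Set.mem_Iic, hc]
    rw [this]
    exact (integrable_const (1:ℝ)).indicator ((hX 0) measurableSet_Iic)
  have hindep : Pairwise (Function.onFun (IndepFun · · P) Z) :=
    fun i j hij => (hpind hij).comp φm φm
  have hident : ∀ i, IdentDistrib (Z i) (Z 0) P P := fun i =>
    IdentDistrib.comp ⟨(hX i).aemeasurable, (hX 0).aemeasurable, by rw [hXd i, hXd 0]⟩ φm
  have hE : P[Z 0] = (μ (Set.Iic c)).toReal := by
    have : Z 0 = (X 0 ⁻¹' Set.Iic c).indicator (fun _ => (1:ℝ)) := by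
      ext ω
      classical
      rw [hZeq, Set.indicator_apply]
      by_cases hc : X 0 ω ≤ c <;> simp [Set.mem_preimage, Set.mem_Iic, hc]
    rw [this, integral_indicator_const (1:ℝ) ((hX 0) measurableSet_Iic)]
    rw [← hXd 0, Measure.map_apply (hX 0) measurableSet_Iic]
    simp
    rfl
  have := strong_law_ae_real Z hint hindep hident
  rw [hE] at this
  filter_upwards [this] with ω hω
  have : (fun N => ecdf X N ω c) = fun N : ℕ => (∑ i ∈ Finset.range N, Z i ω) / N := by
    ext N
    rw [ecdf, inv_mul_eq_div]
    congr 1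
  rw [this]
  exact hω

/-- from a.e.-eventually membership to convergence of probabilities to 1 -/
lemma tendsto_prob_one {Ω : Type*} [MeasurableSpace Ω] (P : Measure Ω) [IsProbabilityMeasure P]
    (E : ℕ → Set Ω) (h : ∀ᵐ ω ∂P, ∀ᶠ k in atTop, ω ∈ E k) :
    Tendsto (fun k => P (E k)) atTop (𝓝 1) := by
  set S : ℕ → Set Ω := fun k => ⋂ j, ⋂ (_ : k ≤ j), E j with hS
  have hmono : Monotone S := by
    intro k l hkl ω hω
    exact Set.mem_iInter₂.mpr fun j hj => Set.mem_iInter₂.mp hω j (hkl.trans hj)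
  have hsub : ∀ k, S k ⊆ E k := fun k => Set.iInter₂_subset k (le_refl k)
  have hcover : ∀ᵐ ω ∂P, ω ∈ ⋃ k, S k := by
    filter_upwards [h] with ω hω
    obtain ⟨k, hk⟩ := eventually_atTop.mp hω
    exact Set.mem_iUnion.mpr ⟨k, Set.mem_iInter₂.mpr fun j hj => hk j hj⟩
  have hone : P (⋃ k, S k) = 1 := by
    have hc : P ((⋃ k, S k)ᶜ) = 0 := by
      have h0 := ae_iff.mp hcover
      have : (⋃ k, S k)ᶜ = {a | a ∉ ⋃ k, S k} := rfl
      rw [this]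
      exact h0
    have h1 : (1:ENNReal) = P Set.univ := (measure_univ).symm
    have h2 : P Set.univ ≤ P (⋃ k, S k) + P ((⋃ k, S k)ᶜ) := by
      rw [← Set.union_compl_self (⋃ k, S k)]
      exact measure_union_le _ _
    have h3 : P (⋃ k, S k) ≤ 1 := prob_le_one
    rw [hc, add_zero] at h2
    exact le_antisymm h3 (h1 ▸ h2)
  have := tendsto_measure_iUnion_atTop (μ := P) hmono
  rw [hone] at this
  refine tendsto_of_tendsto_of_tendsto_of_le_of_le this tendsto_const_nhds
    (fun k => measure_mono (hsub k)) (fun k => prob_le_one)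

end B

section C

lemma cdf_qinv_eq {K : ℝ → ℝ} (hcont : Continuous K) (hmono : Monotone K)
    (h0 : Tendsto K atBot (𝓝 0)) (h1 : Tendsto K atTop (𝓝 1))
    {t : ℝ} (ht0 : 0 < t) (ht1 : t < 1) : K (qinv K t) = t := by
  obtain ⟨x₀, hx₀⟩ : ∃ x₀, K x₀ < t := (h0.eventually (eventually_lt_nhds ht0)).exists
  obtain ⟨x₁, hx₁⟩ : ∃ x₁, t < K x₁ := (h1.eventually (eventually_gt_nhds ht1)).exists
  have hne : {x | t ≤ K x}.Nonempty := ⟨x₁, le_of_lt hx₁⟩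
  have hbdd : BddBelow {x | t ≤ K x} := by
    refine ⟨x₀, fun x hx => ?_⟩
    by_contra hlt
    push_neg at hlt
    have := hmono hlt.le
    simp only [Set.mem_setOf_eq] at hx
    linarith
  have hclosed : IsClosed {x | t ≤ K x} := isClosed_Ici.preimage hcont
  have hmem := hclosed.csInf_mem hne hbdd
  simp only [Set.mem_setOf_eq] at hmem
  have hx01 : x₀ ≤ x₁ := by
    by_contra hlt
    push_neg at hlt
    have := hmono hlt.le
    linarith
  obtain ⟨c, hc, hKc⟩ := intermediate_value_Icc hx01 hcont.continuousOn
    (Set.mem_Icc.mpr ⟨hx₀.le, hx₁.le⟩)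
  have hle : qinv K t ≤ c := csInf_le hbdd (by simp only [Set.mem_setOf_eq, hKc]; exact le_refl t)
  have : K (qinv K t) ≤ t := by
    calc K (qinv K t) ≤ K c := hmono hle
      _ = t := hKc
  exact le_antisymm this hmem

lemma integral_Ioc_increment {F f : ℝ → ℝ} (hFd : ∀ x, F x = ∫ t in Set.Iic x, f t)
    {u v : ℝ} (huv : u ≤ v) (hint : IntegrableOn f (Set.Iic v) volume) :
    ∫ t in Set.Ioc u v, f t = F v - F u := by
  have h1 : IntegrableOn f (Set.Iic u) volume := hint.mono_set (Set.Iic_subset_Iic.mpr huv)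
  have h2 : IntegrableOn f (Set.Ioc u v) volume := hint.mono_set Set.Ioc_subset_Iic_self
  have := MeasureTheory.setIntegral_union (Set.Iic_disjoint_Ioc le_rfl) measurableSet_Ioc h1 h2
  rw [Set.Iic_union_Ioc_eq_Iic huv] at this
  rw [hFd v, hFd u, this]; ring

lemma ae_nonpos_of_Ioc_integral_zero {f : ℝ → ℝ} {x y : ℝ}
    (hint : IntegrableOn f (Set.Ioc x y) volume)
    (hzero : ∀ u v : ℝ, x ≤ u → u ≤ v → v ≤ y → ∫ t in Set.Ioc u v, f t = 0) :
    ∀ᵐ t ∂(volume.restrict (Set.Ioc x y)), f t ≤ 0 := by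
  set ρ := volume.restrict (Set.Ioc x y) with hρ
  have hintρ : Integrable f ρ := hint
  have hfin : ∀ h : ℝ → ℝ, Integrable h ρ → ∫⁻ t, ENNReal.ofReal (h t) ∂ρ ≠ ⊤ := by
    intro h hh
    have hb : ∀ t, ENNReal.ofReal (h t) ≤ ↑‖h t‖₊ := by
      intro t
      change _ ≤ ‖h t‖ₑ; rw [Real.enorm_eq_ofReal_abs]
      exact ENNReal.ofReal_le_ofReal (le_abs_self _)
    exact ne_top_of_le_ne_top hh.2.ne (lintegral_mono hb)
  set κ₁ := ρ.withDensity (fun t => ENNReal.ofReal (f t)) with hκ₁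
  set κ₂ := ρ.withDensity (fun t => ENNReal.ofReal (-f t)) with hκ₂
  have hκ₁fin : ∀ s : Set ℝ, MeasurableSet s → κ₁ s ≠ ⊤ := by
    intro s hs
    rw [hκ₁, withDensity_apply _ hs]
    exact ne_top_of_le_ne_top (hfin f hintρ) (setLIntegral_le_lintegral _ _)
  have hκ₂fin : ∀ s : Set ℝ, MeasurableSet s → κ₂ s ≠ ⊤ := by
    intro s hs
    rw [hκ₂, withDensity_apply _ hs]
    exact ne_top_of_le_ne_top (hfin _ hintρ.neg) (setLIntegral_le_lintegral _ _)
  have hagree : ∀ u v : ℝ, u < v → κ₁ (Set.Ioc u v) = κ₂ (Set.Ioc u v) := by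
    intro u v huv
    rw [hκ₁, hκ₂, withDensity_apply _ measurableSet_Ioc, withDensity_apply _ measurableSet_Ioc,
      hρ, Measure.restrict_restrict measurableSet_Ioc, Set.Ioc_inter_Ioc]
    set u' := u ⊔ x
    set v' := v ⊓ y
    by_cases hc : u' < v'
    · have hu' : x ≤ u' := le_sup_right
      have hv' : v' ≤ y := inf_le_right
      have hsub : Set.Ioc u' v' ⊆ Set.Ioc x y := Set.Ioc_subset_Ioc hu' hv'
      have hint' : IntegrableOn f (Set.Ioc u' v') volume := hint.mono_set hsub
      have h0 : ∫ t in Set.Ioc u' v', f t = 0 := hzero u' v' hu' hc.le hv'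
      rw [integral_eq_lintegral_pos_part_sub_lintegral_neg_part hint'] at h0
      have hA : ∫⁻ t in Set.Ioc u' v', ENNReal.ofReal (f t) ≠ ⊤ := by
        have hb : ∀ t, ENNReal.ofReal (f t) ≤ ↑‖f t‖₊ := by
          intro t
          change _ ≤ ‖f t‖ₑ; rw [Real.enorm_eq_ofReal_abs]
          exact ENNReal.ofReal_le_ofReal (le_abs_self _)
        exact ne_top_of_le_ne_top hint'.2.ne (lintegral_mono hb)
      have hB : ∫⁻ t in Set.Ioc u' v', ENNReal.ofReal (-f t) ≠ ⊤ := by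
        have hb : ∀ t, ENNReal.ofReal (-f t) ≤ ↑‖f t‖₊ := by
          intro t
          change _ ≤ ‖f t‖ₑ; rw [Real.enorm_eq_ofReal_abs]
          exact ENNReal.ofReal_le_ofReal (neg_le_abs _)
        exact ne_top_of_le_ne_top hint'.2.ne (lintegral_mono hb)
      have heq : (∫⁻ t in Set.Ioc u' v', ENNReal.ofReal (f t)).toReal
          = (∫⁻ t in Set.Ioc u' v', ENNReal.ofReal (-f t)).toReal := by linarith
      exact (ENNReal.toReal_eq_toReal_iff' hA hB).mp heq
    · have hempty : Set.Ioc u' v' = ∅ := Set.Ioc_eq_empty hc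
      rw [hempty]
      simp
  have hκeq : κ₁ = κ₂ := by
    refine MeasureTheory.Measure.ext_of_Ioc' κ₁ κ₂ (fun a b _ => hκ₁fin _ measurableSet_Ioc) ?_
    intro a b hab
    exact hagree a b hab
  have hzero_all : ∀ s : Set ℝ, MeasurableSet s → ∫ t in s, f t ∂ρ = 0 := by
    intro s hs
    have hint_s : Integrable f (ρ.restrict s) := hintρ.restrict
    rw [integral_eq_lintegral_pos_part_sub_lintegral_neg_part hint_s]
    have e1 : ∫⁻ t in s, ENNReal.ofReal (f t) ∂ρ = κ₁ s := (withDensity_apply _ hs).symm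
    have e2 : ∫⁻ t in s, ENNReal.ofReal (-f t) ∂ρ = κ₂ s := (withDensity_apply _ hs).symm
    rw [e1, e2, hκeq]
    simp
  have hneg : 0 ≤ᵐ[ρ] (-f) := by
    refine ae_nonneg_of_forall_setIntegral_nonneg hintρ.neg (fun s hs _ => ?_)
    have : ∫ t in s, (-f) t ∂ρ = - ∫ t in s, f t ∂ρ := by
      simp [integral_neg]
    rw [this, hzero_all s hs]
    simp
  filter_upwards [hneg] with t ht
  simpa using ht


lemma H_strict {lam : ℝ} (hlam : lam ∈ Set.Ioo (0:ℝ) 1) {F G f g : ℝ → ℝ}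
    (hFmono : Monotone F) (hGmono : Monotone G)
    (hFd : ∀ x, F x = ∫ t in Set.Iic x, f t) (hGd : ∀ x, G x = ∫ t in Set.Iic x, g t)
    {Ymax : ℝ} (hIf : IntegrableOn f (Set.Iic Ymax) volume)
    (hIg : IntegrableOn g (Set.Iic Ymax) volume)
    {x y : ℝ} (hxy : x < y) (hyY : y ≤ Ymax)
    (hpos : ∀ t ∈ Set.Ioc x y, 0 < f t ∨ 0 < g t) :
    lam * F x + (1 - lam) * G x < lam * F y + (1 - lam) * G y := by
  obtain ⟨hlam0, hlam1⟩ := hlam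
  by_contra hc
  push_neg at hc
  have hF := hFmono hxy.le
  have hG := hGmono hxy.le
  have hFxy : F x = F y := by nlinarith
  have hGxy : G x = G y := by nlinarith
  have hFconst : ∀ w, x ≤ w → w ≤ y → F w = F x := fun w h1 h2 =>
    le_antisymm (hFxy ▸ hFmono h2) (hFmono h1)
  have hGconst : ∀ w, x ≤ w → w ≤ y → G w = G x := fun w h1 h2 =>
    le_antisymm (hGxy ▸ hGmono h2) (hGmono h1)
  have hIf' : IntegrableOn f (Set.Ioc x y) volume :=
    hIf.mono_set (Set.Ioc_subset_Iic_self.trans (Set.Iic_subset_Iic.mpr hyY))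
  have hIg' : IntegrableOn g (Set.Ioc x y) volume :=
    hIg.mono_set (Set.Ioc_subset_Iic_self.trans (Set.Iic_subset_Iic.mpr hyY))
  have hzf : ∀ u v : ℝ, x ≤ u → u ≤ v → v ≤ y → ∫ t in Set.Ioc u v, f t = 0 := by
    intro u v h1 h2 h3
    rw [integral_Ioc_increment hFd h2 (hIf.mono_set (Set.Iic_subset_Iic.mpr (h3.trans hyY)))]
    rw [hFconst u h1 (h2.trans h3), hFconst v (h1.trans h2) h3]
    ring
  have hzg : ∀ u v : ℝ, x ≤ u → u ≤ v → v ≤ y → ∫ t in Set.Ioc u v, g t = 0 := by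
    intro u v h1 h2 h3
    rw [integral_Ioc_increment hGd h2 (hIg.mono_set (Set.Iic_subset_Iic.mpr (h3.trans hyY)))]
    rw [hGconst u h1 (h2.trans h3), hGconst v (h1.trans h2) h3]
    ring
  have haef := ae_nonpos_of_Ioc_integral_zero hIf' hzf
  have haeg := ae_nonpos_of_Ioc_integral_zero hIg' hzg
  have hmem := ae_restrict_mem (μ := volume) (s := Set.Ioc x y) measurableSet_Ioc
  have hfalse : ∀ᵐ t ∂(volume.restrict (Set.Ioc x y)), False := by
    filter_upwards [haef, haeg, hmem] with t h1 h2 h3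
    rcases hpos t h3 with h | h <;> linarith
  rw [ae_iff] at hfalse
  have huniv : (volume.restrict (Set.Ioc x y)) {a : ℝ | ¬ False} = volume (Set.Ioc x y) := by
    have : {a : ℝ | ¬ False} = Set.univ := by simp
    rw [this, Measure.restrict_apply_univ]
  rw [huniv, Real.volume_Ioc] at hfalse
  have : (0:ℝ) < y - x := by linarith
  exact (ENNReal.ofReal_pos.mpr this).ne' hfalse


lemma cdf_bounds {F : ℝ → ℝ} (hFmono : Monotone F) (hF0 : Tendsto F atBot (𝓝 0))
    (hF1 : Tendsto F atTop (𝓝 1)) (w : ℝ) : 0 ≤ F w ∧ F w ≤ 1 := by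
  constructor
  · exact le_of_tendsto hF0 (Filter.eventually_atBot.mpr ⟨w, fun x hx => hFmono hx⟩)
  · exact ge_of_tendsto hF1 (Filter.eventually_atTop.mpr ⟨w, fun x hx => hFmono hx⟩)

lemma exists_zstar (lam p : ℝ) (hlam : lam ∈ Set.Ioo (0:ℝ) 1) (hp : p ∈ Set.Ioo (0:ℝ) (1/2))
    (F G f g : ℝ → ℝ) (hFcont : Continuous F) (hGcont : Continuous G)
    (hFmono : Monotone F) (hGmono : Monotone G)
    (hF0 : Tendsto F atBot (𝓝 0)) (hF1 : Tendsto F atTop (𝓝 1))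
    (hG0 : Tendsto G atBot (𝓝 0)) (hG1 : Tendsto G atTop (𝓝 1))
    (hFd : ∀ x, F x = ∫ t in Set.Iic x, f t) (hGd : ∀ x, G x = ∫ t in Set.Iic x, g t)
    (hsupp : ∃ U : Set ℝ, IsOpen U ∧
      Set.Icc (qinv (fun x => lam * F x + (1 - lam) * G x) p)
        (qinv (fun x => lam * F x + (1 - lam) * G x) (1 - p)) ⊆ U ∧
      U ⊆ {x | 0 < f x} ∪ {x | 0 < g x})
    (hintr : ∃ z ∈ Set.Icc (qinv (fun x => lam * F x + (1 - lam) * G x) p)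
        (qinv (fun x => lam * F x + (1 - lam) * G x) (1 - p)), G z < F z) :
    ∃ z : ℝ, p < lam * F z + (1 - lam) * G z ∧ lam * F z + (1 - lam) * G z < 1 - p ∧
      G z < F z ∧ ((0 < F z ∧ F z < 1) ∨ (0 < G z ∧ G z < 1)) := by
  obtain ⟨hlam0, hlam1⟩ := hlam
  obtain ⟨hp0, hp1⟩ := hp
  set H : ℝ → ℝ := fun x => lam * F x + (1 - lam) * G x with hH
  have Hcont : Continuous H := (continuous_const.mul hFcont).add (continuous_const.mul hGcont)
  have Hmono : Monotone H := by
    intro u v huv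
    have h1 := hFmono huv
    have h2 := hGmono huv
    simp only [hH]
    nlinarith
  have H0 : Tendsto H atBot (𝓝 0) := by
    have := ((hF0.const_mul lam).add (hG0.const_mul (1-lam)))
    simpa using this
  have H1 : Tendsto H atTop (𝓝 1) := by
    have := ((hF1.const_mul lam).add (hG1.const_mul (1-lam)))
    have h2 : lam * 1 + (1 - lam) * 1 = 1 := by ring
    rw [h2] at this
    exact this
  set a := qinv H p with ha
  set b := qinv H (1 - p) with hb
  have Ha : H a = p := cdf_qinv_eq Hcont Hmono H0 H1 hp0 (by linarith)
  have Hb : H b = 1 - p := cdf_qinv_eq Hcont Hmono H0 H1 (by linarith) (by linarith)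
  have hab : a < b := by
    have hle : a ≤ b := by
      by_contra hlt
      push_neg at hlt
      have := Hmono hlt.le
      rw [Ha, Hb] at this
      linarith
    rcases lt_or_eq_of_le hle with h | h
    · exact h
    · exfalso; rw [h, Hb] at Ha; linarith
  -- integrability
  obtain ⟨Y₀, hY₀b, hFY₀, hGY₀⟩ : ∃ Y₀, b ≤ Y₀ ∧ 0 < F Y₀ ∧ 0 < G Y₀ := by
    have h1 : ∀ᶠ x in atTop, (1:ℝ)/2 < F x := hF1.eventually (eventually_gt_nhds (by norm_num))
    have h2 : ∀ᶠ x in atTop, (1:ℝ)/2 < G x := hG1.eventually (eventually_gt_nhds (by norm_num))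
    have h3 : ∀ᶠ x : ℝ in atTop, b ≤ x := eventually_ge_atTop b
    obtain ⟨x, hx1, hx2, hx3⟩ := (h1.and (h2.and h3)).exists
    exact ⟨x, hx3, by linarith, by linarith⟩
  have hIf : IntegrableOn f (Set.Iic Y₀) volume := by
    by_contra hni
    rw [hFd Y₀, integral_undef hni] at hFY₀
    linarith
  have hIg : IntegrableOn g (Set.Iic Y₀) volume := by
    by_contra hni
    rw [hGd Y₀, integral_undef hni] at hGY₀
    linarith
  obtain ⟨U, hUopen, hUsub, hUpos⟩ := hsupp
  have hpos : ∀ t ∈ Set.Icc a b, 0 < f t ∨ 0 < g t := by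
    intro t ht
    have := hUpos (hUsub ht)
    rcases this with h | h
    · exact Or.inl h
    · exact Or.inr h
  have strict : ∀ u v, a ≤ u → u < v → v ≤ b → H u < H v := by
    intro u v h1 h2 h3
    exact H_strict ⟨hlam0, hlam1⟩ hFmono hGmono hFd hGd hIf hIg h2 (h3.trans hY₀b)
      (fun t ht => hpos t ⟨h1.trans ht.1.le, ht.2.trans h3⟩)
  obtain ⟨z, hz, hGFz⟩ := hintr
  have hz1 : p ≤ H z := by rw [← Ha]; exact Hmono hz.1
  have hz2 : H z ≤ 1 - p := by rw [← Hb]; exact Hmono hz.2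
  -- nudge helper : continuity ball
  have ball : ∀ w : ℝ, G w < F w → ∃ δ : ℝ, 0 < δ ∧ ∀ v, dist v w < δ → G v < F v := by
    intro w hw
    have hev : ∀ᶠ v in 𝓝 w, 0 < F v - G v :=
      ((hFcont.sub hGcont).tendsto w).eventually (eventually_gt_nhds (by simp only [Pi.sub_apply]; linarith))
    obtain ⟨δ, hδ, hball⟩ := Metric.eventually_nhds_iff.mp hev
    exact ⟨δ, hδ, fun v hv => by linarith [hball hv]⟩
  -- Step 1: produce z₁ with a < z₁ < b, p < H z₁ < 1 - p, G z₁ < F z₁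
  have step1 : ∃ z₁, a < z₁ ∧ z₁ < b ∧ p < H z₁ ∧ H z₁ < 1 - p ∧ G z₁ < F z₁ := by
    rcases eq_or_lt_of_le hz2 with h2 | h2
    · -- H z = 1 - p : nudge left
      obtain ⟨δ, hδ, hball⟩ := ball z hGFz
      have haz : a < z := by
        rcases eq_or_lt_of_le hz.1 with h | h
        · exfalso; rw [← h, Ha] at h2; linarith
        · exact h
      set z₁ := max (z - δ/2) ((a + z)/2) with hz₁
      have h3 : a < z₁ := lt_max_of_lt_right (by linarith)
      have h4 : z₁ < z := max_lt (by linarith) (by linarith)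
      have h5 : dist z₁ z < δ := by
        rw [Real.dist_eq, abs_of_neg (by linarith : z₁ - z < 0)]
        have : z - δ/2 ≤ z₁ := le_max_left _ _
        linarith
      refine ⟨z₁, h3, lt_of_lt_of_le h4 hz.2 |>.trans_le (le_refl b), ?_, ?_, hball _ h5⟩
      · rw [← Ha]; exact strict a z₁ (le_refl a) h3 (h4.le.trans hz.2)
      · rw [← Hb] at h2 ⊢
        calc H z₁ < H z := strict z₁ z (h3.le) h4 hz.2
          _ = H b := by rw [← h2]
    · rcases eq_or_lt_of_le hz1 with h1 | h1
      · -- H z = p : nudge right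
        obtain ⟨δ, hδ, hball⟩ := ball z hGFz
        have hzb : z < b := by
          rcases eq_or_lt_of_le hz.2 with h | h
          · exfalso; rw [h, Hb] at h1; linarith
          · exact h
        set z₁ := min (z + δ/2) ((z + b)/2) with hz₁
        have h3 : z < z₁ := lt_min (by linarith) (by linarith)
        have h4 : z₁ < b := min_lt_of_right_lt (by linarith)
        have h5 : dist z₁ z < δ := by
          rw [Real.dist_eq, abs_of_pos (by linarith : (0:ℝ) < z₁ - z)]
          have : z₁ ≤ z + δ/2 := min_le_left _ _
          linarith
        refine ⟨z₁, lt_of_le_of_lt hz.1 h3, h4, ?_, ?_, hball _ h5⟩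
        · rw [h1]; exact strict z z₁ hz.1 h3 h4.le
        · rw [← Hb]; exact strict z₁ b (hz.1.trans h3.le) h4 (le_refl b)
      · -- interior
        have haz : a < z := by
          rcases eq_or_lt_of_le hz.1 with h | h
          · exfalso; rw [← h, Ha] at h1; linarith
          · exact h
        have hzb : z < b := by
          rcases eq_or_lt_of_le hz.2 with h | h
          · exfalso; rw [h, Hb] at h2; linarith
          · exact h
        exact ⟨z, haz, hzb, h1, h2, hGFz⟩
  obtain ⟨z₁, hz₁a, hz₁b, hz₁p, hz₁q, hz₁GF⟩ := step1
  -- Step 2: regularity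
  by_cases hreg : F z₁ < 1 ∨ 0 < G z₁
  · refine ⟨z₁, hz₁p, hz₁q, hz₁GF, ?_⟩
    rcases hreg with h | h
    · left
      have := (cdf_bounds hGmono hG0 hG1 z₁).1
      exact ⟨by linarith, h⟩
    · right
      have := (cdf_bounds hFmono hF0 hF1 z₁).2
      exact ⟨h, by linarith⟩
  · push_neg at hreg
    have hF1z : F z₁ = 1 := le_antisymm (cdf_bounds hFmono hF0 hF1 z₁).2 hreg.1
    have hG0z : G z₁ = 0 := le_antisymm hreg.2 (cdf_bounds hGmono hG0 hG1 z₁).1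
    obtain ⟨δ, hδ, hball⟩ := ball z₁ hz₁GF
    set z₂ := max (z₁ - δ/2) ((a + z₁)/2) with hz₂
    have h3 : a < z₂ := lt_max_of_lt_right (by linarith)
    have h4 : z₂ < z₁ := max_lt (by linarith) (by linarith)
    have h5 : dist z₂ z₁ < δ := by
      rw [Real.dist_eq, abs_of_neg (by linarith : z₂ - z₁ < 0)]
      have : z₁ - δ/2 ≤ z₂ := le_max_left _ _
      linarith
    have hHz₂p : p < H z₂ := by
      rw [← Ha]; exact strict a z₂ (le_refl a) h3 (h4.le.trans hz₁b.le)
    have hHz₂q : H z₂ < H z₁ := strict z₂ z₁ h3.le h4 hz₁b.le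
    have hG0z₂ : G z₂ = 0 := by
      have h6 := hGmono h4.le
      have h7 := (cdf_bounds hGmono hG0 hG1 z₂).1
      linarith
    have hHz₁lam : H z₁ = lam := by simp only [hH]; rw [hF1z, hG0z]; ring
    have hFz₂lt : F z₂ < 1 := by
      have h8 := hHz₂q
      rw [hHz₁lam] at h8
      simp only [hH] at h8
      rw [hG0z₂] at h8
      nlinarith
    have hFz₂pos : 0 < F z₂ := by
      have h8 := hHz₂p
      simp only [hH] at h8
      rw [hG0z₂] at h8
      nlinarith
    exact ⟨z₂, hHz₂p, by calc H z₂ < H z₁ := hHz₂q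
        _ < 1 - p := hz₁q, by rw [hG0z₂]; exact hFz₂pos,
      Or.inl ⟨hFz₂pos, hFz₂lt⟩⟩

end C

lemma tendsto_sqrt_atTop : Tendsto Real.sqrt atTop atTop := by
  rw [tendsto_atTop_atTop]
  intro b
  refine ⟨b ^ 2, fun a ha => ?_⟩
  calc b ≤ |b| := le_abs_self b
    _ = Real.sqrt (b ^ 2) := (Real.sqrt_sq_eq_abs b).symm
    _ ≤ Real.sqrt a := Real.sqrt_le_sqrt ha


lemma Tmin_bound {Ω : Type*} (X Y : ℕ → Ω → ℝ) (m n : ℕ) (ω : Ω) {p z M δ : ℝ}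
    (hmk : 1 ≤ m) (hnk : 1 ≤ n) (hp0 : 0 < p) (hp1 : p < 1/2) (hM : 0 < M) (hδ : 0 < δ)
    (hAk : p ≤ pooled X Y m n ω z) (hBk : pooled X Y m n ω z < 1 - p)
    (hCk : ecdf Y n ω z - ecdf X m ω z ≤ -(δ/2))
    (hDk : 0 < ecdf X m ω z * (1 - ecdf X m ω z) / (m : ℝ) +
      ecdf Y n ω z * (1 - ecdf Y n ω z) / (n : ℝ))
    (hsqk : Real.sqrt (1/(4*(m : ℝ)) + 1/(4*(n : ℝ))) < δ/2/M) :
    Tmin p X Y m n ω ≤ -M := by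
  have hmpos : (0:ℝ) < (m : ℝ) := Nat.cast_pos.mpr (by omega)
  have hnpos : (0:ℝ) < (n : ℝ) := Nat.cast_pos.mpr (by omega)
  set u := ecdf X m ω z with hu_def
  set v := ecdf Y n ω z with hv_def
  set d := u * (1 - u) / (m : ℝ) + v * (1 - v) / (n : ℝ) with hd_def
  set D := 1/(4*(m : ℝ)) + 1/(4*(n : ℝ)) with hD_def
  have hu01 : 0 ≤ u ∧ u ≤ 1 := ⟨ecdf_nonneg X m ω z, ecdf_le_one X m ω z⟩
  have hv01 : 0 ≤ v ∧ v ≤ 1 := ⟨ecdf_nonneg Y n ω z, ecdf_le_one Y n ω z⟩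
  have hdD : d ≤ D := by
    have h1 : u * (1 - u) ≤ 1/4 := by nlinarith [sq_nonneg (2*u - 1)]
    have h2 : v * (1 - v) ≤ 1/4 := by nlinarith [sq_nonneg (2*v - 1)]
    have h3 : u * (1 - u) / (m : ℝ) ≤ 1/(4*(m : ℝ)) := by
      rw [div_le_div_iff₀ hmpos (by positivity)]
      nlinarith
    have h4 : v * (1 - v) / (n : ℝ) ≤ 1/(4*(n : ℝ)) := by
      rw [div_le_div_iff₀ hnpos (by positivity)]
      nlinarith
    simp only [hd_def, hD_def]
    linarith
  have hDpos : 0 < D := by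
    simp only [hD_def]
    positivity
  have hsd : 0 < Real.sqrt d := Real.sqrt_pos.mpr hDk
  have hsD : 0 < Real.sqrt D := Real.sqrt_pos.mpr hDpos
  have hsdD : Real.sqrt d ≤ Real.sqrt D := Real.sqrt_le_sqrt hdD
  have hnum : v - u ≤ -(δ/2) := hCk
  have hnum0 : v - u ≤ 0 := by linarith
  have hzIcc : z ∈ Set.Icc (qinv (pooled X Y m n ω) p)
      (qinv (pooled X Y m n ω) (1 - p)) := by
    constructor
    · exact qinv_pooled_le X Y m n ω (by omega) hp0 hAk
    · exact le_qinv_pooled X Y m n ω (by omega) (by linarith) hBk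
  have hmem := Set.mem_image_of_mem (fun x => (ecdf Y n ω x - ecdf X m ω x) /
      Real.sqrt (ecdf X m ω x * (1 - ecdf X m ω x) / (m : ℝ) +
        ecdf Y n ω x * (1 - ecdf Y n ω x) / (n : ℝ))) hzIcc
  have hle1 : Tmin p X Y m n ω ≤ (v - u) / Real.sqrt d :=
    csInf_le (bddBelow_Tmin_image X Y m n ω _) hmem
  have hle2 : (v - u) / Real.sqrt d ≤ (v - u) / Real.sqrt D := by
    rw [div_le_div_iff₀ hsd hsD]
    exact mul_le_mul_of_nonpos_left hsdD hnum0
  have hle3 : (v - u) / Real.sqrt D ≤ (-(δ/2)) / Real.sqrt D :=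
    (div_le_div_iff_of_pos_right hsD).mpr hnum
  have hle4 : (-(δ/2)) / Real.sqrt D ≤ -M := by
    rw [div_le_iff₀ hsD]
    have h5 : M * Real.sqrt D < M * (δ/2/M) := mul_lt_mul_of_pos_left hsqk hM
    have hMe : M * (δ/2/M) = δ/2 := by
      rw [mul_comm]
      exact div_mul_cancel₀ _ hM.ne'
    rw [hMe] at h5
    linarith
  linarith

lemma Ttsep_bound {Ω : Type*} (X Y : ℕ → Ω → ℝ) (m n : ℕ) (ω : Ω) {p z M δ : ℝ}
    (hmk : 1 ≤ m) (hnk : 1 ≤ n) (hp0 : 0 < p) (hp1 : p < 1/2) (hM : 0 < M) (hδ : 0 < δ)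
    (hAk : p ≤ pooled X Y m n ω z) (hBk : pooled X Y m n ω z < 1 - p)
    (hCk : ecdf Y n ω z - ecdf X m ω z ≤ -(δ/2))
    (hskk : M / δ ≤ Real.sqrt ((m : ℝ) * (n : ℝ) / ((m : ℝ) + (n : ℝ)))) :
    Ttsep p X Y m n ω ≤ -M := by
  have hnum0 : ecdf Y n ω z - ecdf X m ω z ≤ 0 := by linarith
  set z₀ := pooled X Y m n ω z with hz₀def
  have hz₀Icc : z₀ ∈ Set.Icc p (1 - p) := ⟨hAk, hBk.le⟩
  have hz₀pos : 0 < z₀ := lt_of_lt_of_le hp0 hAk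
  have hz₀le1 : z₀ ≤ 1 := pooled_le_one X Y m n ω z
  set Q := qinv (pooled X Y m n ω) z₀ with hQdef
  have hQ1 : Q ≤ z := qinv_pooled_le X Y m n ω (by omega) hz₀pos (le_refl z₀)
  have hQ2 : z₀ ≤ pooled X Y m n ω Q := pooled_qinv_ge X Y m n ω (by omega) hz₀pos hz₀le1
  have hQ3 : pooled X Y m n ω Q ≤ z₀ := pooled_mono X Y m n ω hQ1
  obtain ⟨heU, heV⟩ := ecdf_eq_of_pooled_eq X Y m n ω (by omega) hQ1 (le_antisymm hQ3 hQ2)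
  have hmem := Set.mem_image_of_mem (fun w => (ecdf Y n ω
      (qinv (pooled X Y m n ω) w) - ecdf X m ω
      (qinv (pooled X Y m n ω) w)) / Real.sqrt (w * (1 - w))) hz₀Icc
  have hbdd : BddBelow ((fun w => (ecdf Y n ω (qinv (pooled X Y m n ω) w) -
      ecdf X m ω (qinv (pooled X Y m n ω) w)) / Real.sqrt (w * (1 - w))) ''
      Set.Icc p (1 - p)) := by
    refine ⟨-(Real.sqrt (p * (1 - p)))⁻¹, ?_⟩
    rintro - ⟨w, hw, rfl⟩
    exact Ttsep_value_lb X Y m n ω hp0 hp1 hw _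
  have hinf_le : sInf ((fun w => (ecdf Y n ω (qinv (pooled X Y m n ω) w) -
      ecdf X m ω (qinv (pooled X Y m n ω) w)) / Real.sqrt (w * (1 - w))) ''
      Set.Icc p (1 - p)) ≤ (ecdf Y n ω Q - ecdf X m ω Q) /
      Real.sqrt (z₀ * (1 - z₀)) := csInf_le hbdd hmem
  have hval : (ecdf Y n ω Q - ecdf X m ω Q) / Real.sqrt (z₀ * (1 - z₀))
      = (ecdf Y n ω z - ecdf X m ω z) / Real.sqrt (z₀ * (1 - z₀)) := by rw [heU, heV]
  have hz₀prod : 0 < z₀ * (1 - z₀) := by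
    have h2 := hz₀Icc.2
    have h3 : 0 < 1 - z₀ := by linarith
    exact mul_pos hz₀pos h3
  have hsz : 0 < Real.sqrt (z₀ * (1 - z₀)) := Real.sqrt_pos.mpr hz₀prod
  have hszle : Real.sqrt (z₀ * (1 - z₀)) ≤ 1/2 := by
    have h1 : z₀ * (1 - z₀) ≤ (1/2)^2 := by nlinarith [sq_nonneg (2*z₀ - 1)]
    calc Real.sqrt (z₀ * (1 - z₀)) ≤ Real.sqrt ((1/2)^2) := Real.sqrt_le_sqrt h1
      _ = 1/2 := Real.sqrt_sq (by norm_num)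
  have hvle : (ecdf Y n ω z - ecdf X m ω z) / Real.sqrt (z₀ * (1 - z₀)) ≤ -δ := by
    have h1 : (ecdf Y n ω z - ecdf X m ω z) / Real.sqrt (z₀ * (1 - z₀))
        ≤ (ecdf Y n ω z - ecdf X m ω z) / (1/2) := by
      rw [div_le_div_iff₀ hsz (by norm_num)]
      exact mul_le_mul_of_nonpos_left hszle hnum0
    have h2 : (ecdf Y n ω z - ecdf X m ω z) / (1/2) = 2 * (ecdf Y n ω z - ecdf X m ω z) := by
      ring
    rw [h2] at h1
    linarith
  have hinf : sInf ((fun w => (ecdf Y n ω (qinv (pooled X Y m n ω) w) -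
      ecdf X m ω (qinv (pooled X Y m n ω) w)) / Real.sqrt (w * (1 - w))) ''
      Set.Icc p (1 - p)) ≤ -δ := by
    calc _ ≤ _ := hinf_le
      _ = (ecdf Y n ω z - ecdf X m ω z) / Real.sqrt (z₀ * (1 - z₀)) := hval
      _ ≤ -δ := hvle
  have hsk0 : 0 ≤ Real.sqrt ((m : ℝ) * (n : ℝ) / ((m : ℝ) + (n : ℝ))) := Real.sqrt_nonneg _
  have hstep : Real.sqrt ((m : ℝ) * (n : ℝ) / ((m : ℝ) + (n : ℝ))) *
      sInf ((fun w => (ecdf Y n ω (qinv (pooled X Y m n ω) w) -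
        ecdf X m ω (qinv (pooled X Y m n ω) w)) / Real.sqrt (w * (1 - w))) ''
        Set.Icc p (1 - p)) ≤ Real.sqrt ((m : ℝ) * (n : ℝ) / ((m : ℝ) + (n : ℝ))) * (-δ) :=
    mul_le_mul_of_nonneg_left hinf hsk0
  have hfin : Real.sqrt ((m : ℝ) * (n : ℝ) / ((m : ℝ) + (n : ℝ))) * (-δ) ≤ -M := by
    have h1 : M / δ * δ ≤ Real.sqrt ((m : ℝ) * (n : ℝ) / ((m : ℝ) + (n : ℝ))) * δ :=
      mul_le_mul_of_nonneg_right hskk hδ.le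
    have h2 : M / δ * δ = M := by field_simp
    rw [h2] at h1
    linarith
  rw [Ttsep]
  linarith


set_option maxHeartbeats 1000000 in
theorem stmt_2 [MeasurableSpace Ω] (P : Measure Ω) [IsProbabilityMeasure P]
    (lam p : ℝ) (hlam : lam ∈ Set.Ioo (0 : ℝ) 1) (hp : p ∈ Set.Ioo (0 : ℝ) (1 / 2))
    (F G f g : ℝ → ℝ) (hFcont : Continuous F) (hGcont : Continuous G)
    (hFmono : Monotone F) (hGmono : Monotone G)
    (hF0 : Tendsto F atBot (𝓝 0)) (hF1 : Tendsto F atTop (𝓝 1))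
    (hG0 : Tendsto G atBot (𝓝 0)) (hG1 : Tendsto G atTop (𝓝 1))
    (hFd : ∀ x, F x = ∫ t in Set.Iic x, f t) (hGd : ∀ x, G x = ∫ t in Set.Iic x, g t)
    (hsupp : ∃ U : Set ℝ, IsOpen U ∧ Dp lam p F G ⊆ U ∧
      U ⊆ {x | 0 < f x} ∪ {x | 0 < g x})
    (hintr : ∃ z ∈ Dp lam p F G, G z < F z)
    (μ ν : Measure ℝ) [IsProbabilityMeasure μ] [IsProbabilityMeasure ν]
    (hμ : ∀ x, (μ (Set.Iic x)).toReal = F x) (hν : ∀ x, (ν (Set.Iic x)).toReal = G x)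
    (X Y : ℕ → Ω → ℝ) (hX : ∀ i, Measurable (X i)) (hY : ∀ j, Measurable (Y j))
    (hXd : ∀ i, Measure.map (X i) P = μ) (hYd : ∀ j, Measure.map (Y j) P = ν)
    (hindep : iIndepFun
      (Sum.elim X Y) P)
    (m n : ℕ → ℕ) (hm : Tendsto m atTop atTop) (hn : Tendsto n atTop atTop)
    (hratio : Tendsto (fun k => (m k : ℝ) / ((m k : ℝ) + (n k : ℝ))) atTop (𝓝 lam)) :
    ∀ M : ℝ, 0 < M →
      Tendsto (fun k => P {ω | Tmin p X Y (m k) (n k) ω ≤ -M}) atTop (𝓝 1) ∧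
      Tendsto (fun k => P {ω | Ttsep p X Y (m k) (n k) ω ≤ -M}) atTop (𝓝 1) := by
  intro M hM
  obtain ⟨hp0, hp1⟩ := hp
  obtain ⟨hlam0, hlam1⟩ := hlam
  -- pairwise independence
  have hXind : Pairwise fun i j => IndepFun (X i) (X j) P := by
    intro i j hij
    exact hindep.indepFun (show (Sum.inl i : ℕ ⊕ ℕ) ≠ Sum.inl j from
      fun h => hij (Sum.inl.inj h))
  have hYind : Pairwise fun i j => IndepFun (Y i) (Y j) P := by
    intro i j hij
    exact hindep.indepFun (show (Sum.inr i : ℕ ⊕ ℕ) ≠ Sum.inr j from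
      fun h => hij (Sum.inr.inj h))
  -- the evaluation point
  obtain ⟨z, hzp, hzq, hzGF, hzreg⟩ := exists_zstar lam p ⟨hlam0, hlam1⟩ ⟨hp0, hp1⟩
    F G f g hFcont hGcont hFmono hGmono hF0 hF1 hG0 hG1 hFd hGd hsupp hintr
  -- SLLN
  have hUae := ecdf_tendsto_ae P X hX μ hXd hXind z
  have hVae := ecdf_tendsto_ae P Y hY ν hYd hYind z
  rw [hμ z] at hUae
  rw [hν z] at hVae
  set δ : ℝ := F z - G z with hδdef
  have hδ : 0 < δ := by simp only [hδdef]; linarith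
  -- deterministic sequence facts
  have hmR : Tendsto (fun k => (m k : ℝ)) atTop atTop := tendsto_natCast_atTop_atTop.comp hm
  have hnR : Tendsto (fun k => (n k : ℝ)) atTop atTop := tendsto_natCast_atTop_atTop.comp hn
  have hm1 : ∀ᶠ k in atTop, 1 ≤ m k := hm.eventually_ge_atTop 1
  have hn1 : ∀ᶠ k in atTop, 1 ≤ n k := hn.eventually_ge_atTop 1
  have hratio2 : Tendsto (fun k => 1 - (m k : ℝ) / ((m k : ℝ) + (n k : ℝ))) atTop
      (𝓝 (1 - lam)) := tendsto_const_nhds.sub hratio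
  -- D_k = 1/(4m) + 1/(4n) → 0
  have hDk : Tendsto (fun k => 1/(4*(m k : ℝ)) + 1/(4*(n k : ℝ))) atTop (𝓝 0) := by
    have h1 : Tendsto (fun k => 4*(m k : ℝ)) atTop atTop := hmR.const_mul_atTop (by norm_num)
    have h2 : Tendsto (fun k => 4*(n k : ℝ)) atTop atTop := hnR.const_mul_atTop (by norm_num)
    have := (h1.inv_tendsto_atTop).add (h2.inv_tendsto_atTop)
    simpa [one_div] using this
  have hsqDk : Tendsto (fun k => Real.sqrt (1/(4*(m k : ℝ)) + 1/(4*(n k : ℝ)))) atTop (𝓝 0) := by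
    have := hDk.sqrt
    simpa using this
  have hsqDM : ∀ᶠ k in atTop,
      Real.sqrt (1/(4*(m k : ℝ)) + 1/(4*(n k : ℝ))) < δ/2/M :=
    hsqDk.eventually (eventually_lt_nhds (by positivity))
  -- s_k → ∞
  have hsk : Tendsto (fun k => Real.sqrt ((m k : ℝ) * (n k : ℝ) / ((m k : ℝ) + (n k : ℝ))))
      atTop atTop := by
    have hbase : Tendsto (fun k => (n k : ℝ) * ((m k : ℝ) / ((m k : ℝ) + (n k : ℝ)))) atTop
        atTop := hnR.atTop_mul_pos hlam0 hratio
    have heq : ∀ᶠ k in atTop, (n k : ℝ) * ((m k : ℝ) / ((m k : ℝ) + (n k : ℝ)))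
        = (m k : ℝ) * (n k : ℝ) / ((m k : ℝ) + (n k : ℝ)) := by
      filter_upwards [hm1, hn1] with k h1 h2
      ring
    exact tendsto_sqrt_atTop.comp (hbase.congr' heq)
  have hskM : ∀ᶠ k in atTop,
      M / δ ≤ Real.sqrt ((m k : ℝ) * (n k : ℝ) / ((m k : ℝ) + (n k : ℝ))) :=
    hsk.eventually_ge_atTop (M / δ)
  -- the key almost-everywhere eventual statement
  have key : ∀ᵐ ω ∂P, ∀ᶠ k in atTop,
      Tmin p X Y (m k) (n k) ω ≤ -M ∧ Ttsep p X Y (m k) (n k) ω ≤ -M := by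
    filter_upwards [hUae, hVae] with ω hu hv
    have hu' : Tendsto (fun k => ecdf X (m k) ω z) atTop (𝓝 (F z)) := hu.comp hm
    have hv' : Tendsto (fun k => ecdf Y (n k) ω z) atTop (𝓝 (G z)) := hv.comp hn
    -- pooled tendsto
    have hpool : Tendsto (fun k => pooled X Y (m k) (n k) ω z) atTop
        (𝓝 (lam * F z + (1 - lam) * G z)) := by
      have hcomb : Tendsto (fun k => ((m k : ℝ) / ((m k : ℝ) + (n k : ℝ))) * ecdf X (m k) ω z
          + (1 - (m k : ℝ) / ((m k : ℝ) + (n k : ℝ))) * ecdf Y (n k) ω z) atTop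
          (𝓝 (lam * F z + (1 - lam) * G z)) := (hratio.mul hu').add (hratio2.mul hv')
      refine hcomb.congr' ?_
      filter_upwards [hm1, hn1] with k h1 h2
      have hmn : (0:ℝ) < (m k : ℝ) + (n k : ℝ) := by
        have h5 : (0:ℝ) < (m k : ℝ) := Nat.cast_pos.mpr (by omega)
        have h6 : (0:ℝ) ≤ (n k : ℝ) := Nat.cast_nonneg _
        linarith
      rw [pooled]
      field_simp
      ring
    have hA : ∀ᶠ k in atTop, p ≤ pooled X Y (m k) (n k) ω z :=
      hpool.eventually (eventually_ge_nhds hzp)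
    have hB : ∀ᶠ k in atTop, pooled X Y (m k) (n k) ω z < 1 - p :=
      hpool.eventually (eventually_lt_nhds hzq)
    have hC : ∀ᶠ k in atTop,
        ecdf Y (n k) ω z - ecdf X (m k) ω z ≤ -(δ/2) := by
      have hsub : Tendsto (fun k => ecdf Y (n k) ω z - ecdf X (m k) ω z) atTop
          (𝓝 (G z - F z)) := hv'.sub hu'
      exact hsub.eventually (eventually_le_nhds (by simp only [hδdef]; linarith))
    have hD : ∀ᶠ k in atTop, 0 < ecdf X (m k) ω z * (1 - ecdf X (m k) ω z) / (m k : ℝ) +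
        ecdf Y (n k) ω z * (1 - ecdf Y (n k) ω z) / (n k : ℝ) := by
      rcases hzreg with ⟨hq1, hq2⟩ | ⟨hq1, hq2⟩
      · have e1 : ∀ᶠ k in atTop, 0 < ecdf X (m k) ω z :=
          hu'.eventually (eventually_gt_nhds hq1)
        have e2 : ∀ᶠ k in atTop, ecdf X (m k) ω z < 1 :=
          hu'.eventually (eventually_lt_nhds hq2)
        filter_upwards [e1, e2, hm1, hn1] with k h1 h2 h3 h4
        have hmpos : (0:ℝ) < (m k : ℝ) := Nat.cast_pos.mpr (by omega)
        have hnpos : (0:ℝ) < (n k : ℝ) := Nat.cast_pos.mpr (by omega)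
        have hv0 := ecdf_nonneg Y (n k) ω z
        have hv1 := ecdf_le_one Y (n k) ω z
        have t1 : 0 < ecdf X (m k) ω z * (1 - ecdf X (m k) ω z) / (m k : ℝ) := by
          have : 0 < ecdf X (m k) ω z * (1 - ecdf X (m k) ω z) := by nlinarith
          positivity
        have t2 : 0 ≤ ecdf Y (n k) ω z * (1 - ecdf Y (n k) ω z) / (n k : ℝ) := by
          have : 0 ≤ ecdf Y (n k) ω z * (1 - ecdf Y (n k) ω z) := by nlinarith
          positivity
        linarith
      · have e1 : ∀ᶠ k in atTop, 0 < ecdf Y (n k) ω z :=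
          hv'.eventually (eventually_gt_nhds hq1)
        have e2 : ∀ᶠ k in atTop, ecdf Y (n k) ω z < 1 :=
          hv'.eventually (eventually_lt_nhds hq2)
        filter_upwards [e1, e2, hm1, hn1] with k h1 h2 h3 h4
        have hmpos : (0:ℝ) < (m k : ℝ) := Nat.cast_pos.mpr (by omega)
        have hnpos : (0:ℝ) < (n k : ℝ) := Nat.cast_pos.mpr (by omega)
        have hv0 := ecdf_nonneg X (m k) ω z
        have hv1 := ecdf_le_one X (m k) ω z
        have t1 : 0 < ecdf Y (n k) ω z * (1 - ecdf Y (n k) ω z) / (n k : ℝ) := by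
          have : 0 < ecdf Y (n k) ω z * (1 - ecdf Y (n k) ω z) := by nlinarith
          positivity
        have t2 : 0 ≤ ecdf X (m k) ω z * (1 - ecdf X (m k) ω z) / (m k : ℝ) := by
          have : 0 ≤ ecdf X (m k) ω z * (1 - ecdf X (m k) ω z) := by nlinarith
          positivity
        linarith
    filter_upwards [hA, hB, hC, hD, hm1, hn1, hsqDM, hskM] with k hAk hBk hCk hDk' hmk hnk
      hsqk hskk
    exact ⟨Tmin_bound X Y (m k) (n k) ω hmk hnk hp0 hp1 hM hδ hAk hBk hCk hDk' hsqk,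
      Ttsep_bound X Y (m k) (n k) ω hmk hnk hp0 hp1 hM hδ hAk hBk hCk hskk⟩
  constructor
  · exact tendsto_prob_one P _ (key.mono fun ω hω => hω.mono fun k hk => hk.1)
  · exact tendsto_prob_one P _ (key.mono fun ω hω => hω.mono fun k hk => hk.2)


end
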